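/- Let n ≥ 2, let ψ : {1,…,n} → ℂ and let P be the homogeneous operator of degree 0 associated to ψ, i.e. P(e_i) = ψ(i)·e_i for all i. Suppose P is a Nijenhuis operator, i.e. P(x)·P(y) = P(x·P(y) + P(x)·y − P(x·y)) for all x, y ∈ A. Then ψ is constant: ψ(i) = ψ(1) for all 1 ≤ i ≤ n, so that P is a scalar multiple of the identity map of A. -/
import Mathlib


open Finset

/-- Coordinate space of the `n`-dimensional complex null-filiform associative algebra,
with respect to the basis `e_1, …, e_n` (coordinate `m : Fin n` corresponds to `e_{m+1}`). -/
abbrev NF (n : ℕ) : Type := Fin n → ℂ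

/-- Multiplication of the null-filiform algebra: `e_i · e_j = e_{i+j}` if `i + j ≤ n`
and `e_i · e_j = 0` if `i + j > n`, extended bilinearly. -/
noncomputable def nfMul {n : ℕ} (x y : NF n) : NF n :=
  fun m => ∑ i : Fin n, ∑ j : Fin n,
    if (i : ℕ) + (j : ℕ) + 1 = (m : ℕ) then x i * y j else 0

/-- The basis element `e_k`, for `1 ≤ k ≤ n` (it is `0` if `k = 0` or `k > n`). -/
noncomputable def nfE (n k : ℕ) : NF n := fun m => if (m : ℕ) + 1 = k then 1 else 0

/-- The `k`-th power (for `k ≥ 1`) of an element of the null-filiform algebra. -/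
noncomputable def nfPow {n : ℕ} (x : NF n) : ℕ → NF n
  | 0 => 0
  | 1 => x
  | k + 2 => nfMul (nfPow x (k + 1)) x

lemma nfMul_smul_left {n : ℕ} (c : ℂ) (x y : NF n) :
    nfMul (c • x) y = c • nfMul x y := by
  funext m
  simp [nfMul, Finset.mul_sum, mul_ite, mul_assoc]

lemma nfMul_smul_right {n : ℕ} (c : ℂ) (x y : NF n) :
    nfMul x (c • y) = c • nfMul x y := by
  funext m
  simp [nfMul, Finset.mul_sum, mul_ite]
  congr 1; ext i; congr 1; ext j; split <;> ring_nf

lemma nfMul_E {n a b : ℕ} (ha : 1 ≤ a) (hb : 1 ≤ b) (hab : a + b ≤ n) :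
    nfMul (nfE n a) (nfE n b) = nfE n (a + b) := by
  funext m
  have han : a - 1 < n := by omega
  have hbn : b - 1 < n := by omega
  simp only [nfMul, nfE]
  rw [Finset.sum_eq_single (⟨a - 1, han⟩ : Fin n)]
  · rw [Finset.sum_eq_single (⟨b - 1, hbn⟩ : Fin n)]
    · simp only []
      by_cases h : (m : ℕ) + 1 = a + b
      · rw [if_pos (by omega), if_pos (by omega), if_pos (by omega), if_pos (by omega)]; ring
      · rw [if_neg (by omega), if_neg (by omega)]
    · intro j _ hj
      have : (j : ℕ) + 1 ≠ b := by
        intro h; exact hj (Fin.ext (by simp only [Fin.val_mk]; omega))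
      simp [this]
    · simp
  · intro i _ hi
    rw [Finset.sum_eq_zero]
    intro j _
    have : (i : ℕ) + 1 ≠ a := by
      intro h; exact hi (Fin.ext (by simp only [Fin.val_mk]; omega))
    simp [this]
  · simp

lemma nf_decomp {n : ℕ} (x : NF n) : x = ∑ m : Fin n, x m • nfE n ((m : ℕ) + 1) := by
  funext k
  simp only [Finset.sum_apply, Pi.smul_apply, nfE, smul_eq_mul, mul_ite, mul_one, mul_zero]
  rw [Finset.sum_eq_single k]
  · simp
  · intro j _ hj
    rw [if_neg (fun h => hj (Fin.ext (by omega)))]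
  · simp

/-- A homogeneous Nijenhuis operator of degree `0` on the null-filiform algebra (`n ≥ 2`)
is a scalar multiple of the identity: `ψ(i) = ψ(1)` for all `1 ≤ i ≤ n`. -/
theorem nijenhuis_degree0 (n : ℕ) (hn : 2 ≤ n) (ψ : ℕ → ℂ)
    (P : NF n →ₗ[ℂ] NF n)
    (hP : ∀ i, 1 ≤ i → i ≤ n → P (nfE n i) = ψ i • nfE n i)
    (hNij : ∀ x y : NF n,
      nfMul (P x) (P y) =
        P (nfMul x (P y) + nfMul (P x) y - P (nfMul x y))) :
    (∀ i, 1 ≤ i → i ≤ n → ψ i = ψ 1) ∧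
    P = ψ 1 • (LinearMap.id : NF n →ₗ[ℂ] NF n) := by
  have key : ∀ i, 1 ≤ i → i + 1 ≤ n →
      ψ 1 * ψ i = (ψ i + ψ 1 - ψ (1 + i)) * ψ (1 + i) := by
    intro i hi1 hin
    have h := hNij (nfE n 1) (nfE n i)
    rw [hP 1 le_rfl (by omega), hP i hi1 (by omega),
      nfMul_smul_left, nfMul_smul_right, nfMul_smul_left,
      nfMul_E le_rfl hi1 (by omega),
      hP (1 + i) (by omega) (by omega),
      map_sub, map_add, map_smul, map_smul, map_smul,
      hP (1 + i) (by omega) (by omega)] at h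
    have h2 := congrFun h ⟨i, by omega⟩
    simp only [Pi.smul_apply, Pi.add_apply, Pi.sub_apply, nfE, smul_eq_mul] at h2
    rw [if_pos (by omega)] at h2
    linear_combination h2
  have hconst : ∀ i, 1 ≤ i → i ≤ n → ψ i = ψ 1 := by
    intro i
    induction i with
    | zero => omega
    | succ j ih =>
      intro h1 h2
      rcases Nat.eq_zero_or_pos j with h | h
      · subst h; rfl
      · have hj : ψ j = ψ 1 := ih (by omega) (by omega)
        have hk := key j (by omega) (by omega)
        have : (ψ (1 + j) - ψ 1) * (ψ (1 + j) - ψ j) = 0 := by linear_combination hk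
        rw [hj] at this
        have := mul_self_eq_zero.mp this
        have := sub_eq_zero.mp this
        rw [Nat.add_comm] at this
        exact this
  refine ⟨hconst, ?_⟩
  apply LinearMap.ext
  intro x
  conv_lhs => rw [nf_decomp x]
  rw [map_sum]
  simp only [map_smul]
  have : ∀ m : Fin n, P (nfE n ((m : ℕ) + 1)) = ψ 1 • nfE n ((m : ℕ) + 1) := by
    intro m
    rw [hP ((m : ℕ) + 1) (by omega) (by omega),
      hconst ((m : ℕ) + 1) (by omega) (by omega)]
  simp only [this]
  rw [LinearMap.smul_apply, LinearMap.id_apply]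
  conv_rhs => rw [nf_decomp x]
  rw [Finset.smul_sum]
  exact Finset.sum_congr rfl fun m _ => smul_comm _ _ _
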